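/- arXiv:2303.03534 — 4 statements merged into one kernel-verified Lean document; each statement's English description precedes it below -/
import Mathlib

section
/- Let f : ℝⁿ → ℝ be differentiable, let α > 0, and define the gradient iterates x_{k+1} = x_k − α ∇f(x_k). If there is a lower bound α ≥ α̲ > 0 on the step size and the total length ∑_{i=0}^∞ ‖x_{i+1} − x_i‖ is finite, then for all k, min_{i=0,…,k} ‖∇f(x_i)‖ ≤ (2/α̲)/(k+2) · ∑_{i=⌊k/2⌋}^∞ ‖x_{i+1} − x_i‖. -/
/-!
Each gradient step has length `α ‖∇f(x_i)‖ ≥ α̲ · min_{j ≤ k} ‖∇f(x_j)‖` for `i ≤ k`. The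
`k - ⌊k/2⌋ + 1 ≥ (k + 2) / 2` steps with index in `[⌊k/2⌋, k]` therefore have total length at
least `α̲ (k + 2) / 2` times that minimum, and they are part of the tail `∑_{i ≥ ⌊k/2⌋}`.
-/

open Finset

lemma natCast_mul_le_tsum_nat_add {a : ℕ → ℝ} (ha : ∀ i, 0 ≤ a i) (hs : Summable a) {c : ℝ}
    {m N : ℕ} (hc : ∀ i < N, c ≤ a (m + i)) : N * c ≤ ∑' i, a (m + i) :=
  calc (N : ℝ) * c = ∑ _i ∈ range N, c := by simp
    _ ≤ ∑ i ∈ range N, a (m + i) := sum_le_sum fun i hi => hc i (mem_range.1 hi)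
    _ ≤ ∑' i, a (m + i) :=
      (hs.comp_injective (add_right_injective m)).sum_le_tsum _ fun i _ => ha _

theorem inf'_Icc_le_div_mul_tsum {a b : ℕ → ℝ} (hs : Summable a) {c : ℝ} (hc : 0 < c)
    (hb : ∀ i, 0 ≤ b i) (hab : ∀ i, c * b i ≤ a i) (k : ℕ) :
    (Icc 0 k).inf' (nonempty_Icc.2 k.zero_le) b ≤ (2 / c) / ((k : ℝ) + 2) * ∑' i, a (k / 2 + i) := by
  set m := (Icc 0 k).inf' (nonempty_Icc.2 k.zero_le) b
  have hm : 0 ≤ m := le_inf' _ _ fun i _ => hb i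
  have htail : ((k - k / 2 + 1 : ℕ) : ℝ) * (c * m) ≤ ∑' i, a (k / 2 + i) := by
    refine natCast_mul_le_tsum_nat_add (fun i => (mul_nonneg hc.le (hb i)).trans (hab i)) hs
      fun i hi => (mul_le_mul_of_nonneg_left (inf'_le _ ?_) hc.le).trans (hab _)
    simp only [mem_Icc]
    omega
  have hcount : (k : ℝ) + 2 ≤ 2 * (k - k / 2 + 1 : ℕ) := by
    exact_mod_cast (by omega : k + 2 ≤ 2 * (k - k / 2 + 1))
  rw [div_div, div_mul_eq_mul_div, le_div_iff₀ (by positivity)]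
  nlinarith [mul_le_mul_of_nonneg_left hcount (mul_nonneg hc.le hm)]

theorem stmt1 {n : ℕ} (f : EuclideanSpace ℝ (Fin n) → ℝ)
    (x : ℕ → EuclideanSpace ℝ (Fin n)) (α αmin : ℝ)
    (hαmin : 0 < αmin) (hα : αmin ≤ α)
    (hrec : ∀ k, x (k + 1) = x k - α • gradient f (x k))
    (hsum : Summable fun i => ‖x (i + 1) - x i‖) (k : ℕ) :
    (Finset.Icc 0 k).inf' (by simp) (fun i => ‖gradient f (x i)‖) ≤
      (2 / αmin) / ((k : ℝ) + 2) * ∑' i : ℕ, ‖x (k / 2 + i + 1) - x (k / 2 + i)‖ := by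
  have hstep (i : ℕ) : αmin * ‖gradient f (x i)‖ ≤ ‖x (i + 1) - x i‖ := by
    rw [hrec i, sub_sub_cancel_left, norm_neg, norm_smul,
      Real.norm_of_nonneg (hαmin.le.trans hα)]
    exact mul_le_mul_of_nonneg_right hα (norm_nonneg _)
  exact inf'_Icc_le_div_mul_tsum hsum hαmin (fun i => norm_nonneg _) hstep k
end

section
/- Let M ∈ ℝ^{m×n} and let X : [0,T) → ℝ^{m×r}, Y : [0,T) → ℝ^{n×r} be differentiable functions satisfying X' = −2(XYᵀ − M)Y and Y' = −2(XYᵀ − M)ᵀX. Then the matrix XᵀX − YᵀY is constant in t. -/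
open Matrix
attribute [local instance] Matrix.frobeniusNormedAddCommGroup Matrix.frobeniusNormedSpace

noncomputable def mulCLM (a b c : ℕ) :
    Matrix (Fin a) (Fin b) ℝ →L[ℝ] (@ContinuousLinearMap ℝ ℝ _ _ (RingHom.id ℝ) (Matrix (Fin b) (Fin c) ℝ) PseudoMetricSpace.toUniformSpace.toTopologicalSpace _ (Matrix (Fin a) (Fin c) ℝ) PseudoMetricSpace.toUniformSpace.toTopologicalSpace _ _ _) :=
  LinearMap.toContinuousLinearMap
  { toFun := fun A => LinearMap.toContinuousLinearMap
      { toFun := fun B => A * B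
        map_add' := Matrix.mul_add A
        map_smul' := fun r B => Matrix.mul_smul A r B }
    map_add' := fun A A' => by ext B : 1; simp [Matrix.add_mul]
    map_smul' := fun r A => by ext B : 1; simp [Matrix.smul_mul] }

@[simp] lemma mulCLM_apply {a b c : ℕ} (A : Matrix (Fin a) (Fin b) ℝ)
    (B : Matrix (Fin b) (Fin c) ℝ) : mulCLM a b c A B = A * B := rfl

noncomputable def trCLM (a b : ℕ) :
    Matrix (Fin a) (Fin b) ℝ →L[ℝ] Matrix (Fin b) (Fin a) ℝ :=
  LinearMap.toContinuousLinearMap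
    (Matrix.transposeLinearEquiv (Fin a) (Fin b) ℝ ℝ).toLinearMap

@[simp] lemma trCLM_apply {a b : ℕ} (A : Matrix (Fin a) (Fin b) ℝ) : trCLM a b A = Aᵀ := rfl

lemma HasDerivWithinAt.matmul {a b c : ℕ} {f : ℝ → Matrix (Fin a) (Fin b) ℝ}
    {g : ℝ → Matrix (Fin b) (Fin c) ℝ} {f' : Matrix (Fin a) (Fin b) ℝ}
    {g' : Matrix (Fin b) (Fin c) ℝ} {s : Set ℝ} {x : ℝ}
    (hf : HasDerivWithinAt f f' s x) (hg : HasDerivWithinAt g g' s x) :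
    HasDerivWithinAt (fun t => f t * g t) (f' * g x + f x * g') s x := by
  have h1 : HasDerivWithinAt (fun t => mulCLM a b c (f t)) (mulCLM a b c f') s x :=
    (mulCLM a b c).hasFDerivAt.comp_hasDerivWithinAt x hf
  have h2 := h1.clm_apply hg
  exact h2

lemma HasDerivWithinAt.mtranspose {a b : ℕ} {f : ℝ → Matrix (Fin a) (Fin b) ℝ}
    {f' : Matrix (Fin a) (Fin b) ℝ} {s : Set ℝ} {x : ℝ}
    (hf : HasDerivWithinAt f f' s x) :
    HasDerivWithinAt (fun t => (f t)ᵀ) f'ᵀ s x := by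
  have h0 := (trCLM a b).hasFDerivAt.comp_hasDerivWithinAt x hf
  exact h0

theorem stmt2 {m n r : ℕ} (hm : 0 < m) (hn : 0 < n) (hr : 0 < r)
    (M : Matrix (Fin m) (Fin n) ℝ) (T : ℝ) (hT : 0 < T)
    (X : ℝ → Matrix (Fin m) (Fin r) ℝ) (Y : ℝ → Matrix (Fin n) (Fin r) ℝ)
    (hX : ∀ t ∈ Set.Ico (0 : ℝ) T,
      HasDerivWithinAt X ((-2 : ℝ) • ((X t * (Y t)ᵀ - M) * Y t)) (Set.Ico (0 : ℝ) T) t)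
    (hY : ∀ t ∈ Set.Ico (0 : ℝ) T,
      HasDerivWithinAt Y ((-2 : ℝ) • ((X t * (Y t)ᵀ - M)ᵀ * X t)) (Set.Ico (0 : ℝ) T) t) :
    ∀ t ∈ Set.Ico (0 : ℝ) T, ∀ s ∈ Set.Ico (0 : ℝ) T,
      (X t)ᵀ * X t - (Y t)ᵀ * Y t = (X s)ᵀ * X s - (Y s)ᵀ * Y s := by
  set s : Set ℝ := Set.Ico (0 : ℝ) T with hs
  set g : ℝ → Matrix (Fin r) (Fin r) ℝ := fun t => (X t)ᵀ * X t - (Y t)ᵀ * Y t with hg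
  have key : ∀ t ∈ s, HasDerivWithinAt g 0 s t := by
    intro t ht
    have hXt := hX t ht
    have hYt := hY t ht
    have h1 : HasDerivWithinAt g
        ((((-2 : ℝ) • ((X t * (Y t)ᵀ - M) * Y t))ᵀ * X t +
          (X t)ᵀ * ((-2 : ℝ) • ((X t * (Y t)ᵀ - M) * Y t))) -
         (((-2 : ℝ) • ((X t * (Y t)ᵀ - M)ᵀ * X t))ᵀ * Y t +
          (Y t)ᵀ * ((-2 : ℝ) • ((X t * (Y t)ᵀ - M)ᵀ * X t)))) s t :=
      (hXt.mtranspose.matmul hXt).sub (hYt.mtranspose.matmul hYt)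
    convert h1 using 1
    set A := X t * (Y t)ᵀ - M
    simp only [Matrix.transpose_smul, Matrix.transpose_mul, Matrix.transpose_transpose,
      Matrix.smul_mul, Matrix.mul_smul, Matrix.mul_assoc]
    abel
  have hconv : Convex ℝ s := convex_Ico 0 T
  have hdiff : DifferentiableOn ℝ g s := fun t ht => (key t ht).differentiableWithinAt
  intro t ht u hu
  refine hconv.is_const_of_fderivWithin_eq_zero hdiff (fun z hz => ?_) ht hu
  have := (key z hz).hasFDerivWithinAt.fderivWithin ((uniqueDiffOn_Ico 0 T) z hz)
  refine this.trans ?_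
  ext v
  simp
  rfl
end

section
/- Let f : ℝⁿ → ℝ be differentiable with an M-Lipschitz gradient on a convex set containing x and y = x − α∇f(x) with 0 < α and Mα < 2. Then ‖y − x‖·‖∇f(y)‖ ≤ ((2 + 2Mα)/(2 − Mα))(f(x) − f(y)). -/
open InnerProductSpace

lemma descent_aux {n : ℕ} (f : EuclideanSpace ℝ (Fin n) → ℝ) (hf : Differentiable ℝ f)
    (s : Set (EuclideanSpace ℝ (Fin n))) (hconv : Convex ℝ s) (M : ℝ) (hM : 0 ≤ M)
    (hLip : ∀ a ∈ s, ∀ b ∈ s, ‖gradient f a - gradient f b‖ ≤ M * ‖a - b‖)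
    (x y : EuclideanSpace ℝ (Fin n)) (hx : x ∈ s) (hy : y ∈ s) :
    f y ≤ f x + inner ℝ (gradient f x) (y - x) + M / 2 * ‖y - x‖ ^ 2 := by
  set v := y - x with hv
  set c : ℝ := inner ℝ (gradient f x) v with hc
  set g : ℝ → ℝ := fun t => f (x + t • v) - t * c - M * t ^ 2 / 2 * ‖v‖ ^ 2 with hg
  have hline : ∀ t : ℝ, HasDerivAt (fun t : ℝ => x + t • v) v t := by
    intro t
    simpa using ((hasDerivAt_id t).smul_const v).const_add x
  have hderiv : ∀ t : ℝ,
      HasDerivAt g (inner ℝ (gradient f (x + t • v)) v - c - M * t * ‖v‖ ^ 2) t := by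
    intro t
    have h1 : HasDerivAt (fun t : ℝ => f (x + t • v))
        ((inner ℝ (gradient f (x + t • v)) v : ℝ)) t := by
      have := ((hf (x + t • v)).hasGradientAt.hasFDerivAt).comp_hasDerivAt t (hline t)
      exact this.congr_deriv (by simp)
    have h2 : HasDerivAt (fun t : ℝ => t * c) c t := by
      simpa using (hasDerivAt_id t).mul_const c
    have h3 : HasDerivAt (fun t : ℝ => M * t ^ 2 / 2 * ‖v‖ ^ 2)
        (M * t * ‖v‖ ^ 2) t := by
      have : HasDerivAt (fun t : ℝ => t ^ 2) (2 * t) t := by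
        simpa using hasDerivAt_pow 2 t
      have := ((this.const_mul M).div_const 2).mul_const (‖v‖ ^ 2)
      exact this.congr_deriv (by ring)
    exact (h1.sub h2).sub h3
  have hmem : ∀ t ∈ Set.Icc (0:ℝ) 1, x + t • v ∈ s := fun t ht =>
    hconv.add_smul_sub_mem hx hy ht
  have hanti : AntitoneOn g (Set.Icc 0 1) := by
    apply antitoneOn_of_deriv_nonpos (convex_Icc 0 1)
    · exact (Differentiable.continuous (fun t => (hderiv t).differentiableAt)).continuousOn
    · intro t ht
      exact ((hderiv t).differentiableAt).differentiableWithinAt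
    · intro t ht
      rw [interior_Icc] at ht
      rw [(hderiv t).deriv]
      have hts : x + t • v ∈ s := hmem t ⟨le_of_lt ht.1, le_of_lt ht.2⟩
      have hinner : (inner ℝ (gradient f (x + t • v)) v : ℝ) - c
          = inner ℝ (gradient f (x + t • v) - gradient f x) v := by
        rw [inner_sub_left, hc]
      have hb : (inner ℝ (gradient f (x + t • v) - gradient f x) v : ℝ)
          ≤ M * t * ‖v‖ ^ 2 := by
        calc (inner ℝ (gradient f (x + t • v) - gradient f x) v : ℝ)
            ≤ ‖gradient f (x + t • v) - gradient f x‖ * ‖v‖ := real_inner_le_norm _ _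
          _ ≤ (M * ‖(x + t • v) - x‖) * ‖v‖ := by
              gcongr; exact hLip _ hts _ hx
          _ = M * t * ‖v‖ ^ 2 := by
              rw [add_sub_cancel_left, norm_smul, Real.norm_eq_abs,
                abs_of_pos ht.1]
              ring
      linarith [hinner ▸ hb]
  have h01 : g 1 ≤ g 0 := hanti (by norm_num) (by norm_num) (by norm_num)
  have hg1 : g 1 = f y - c - M / 2 * ‖v‖ ^ 2 := by
    have : x + (1:ℝ) • v = y := by rw [one_smul, hv]; abel
    simp only [hg, this, one_mul, one_pow]
    norm_num
  have hg0 : g 0 = f x := by simp [hg]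
  rw [hg1, hg0] at h01
  linarith

theorem stmt10 {n : ℕ} (f : EuclideanSpace ℝ (Fin n) → ℝ) (hf : Differentiable ℝ f)
    (s : Set (EuclideanSpace ℝ (Fin n))) (hconv : Convex ℝ s)
    (M α : ℝ) (hM : 0 < M) (hα : 0 < α) (hMα : M * α < 2)
    (hLip : ∀ a ∈ s, ∀ b ∈ s, ‖gradient f a - gradient f b‖ ≤ M * ‖a - b‖)
    (x y : EuclideanSpace ℝ (Fin n)) (hx : x ∈ s) (hy : y ∈ s)
    (hstep : y = x - α • gradient f x) :
    ‖y - x‖ * ‖gradient f y‖ ≤ (2 + 2 * M * α) / (2 - M * α) * (f x - f y) := by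
  set G := gradient f x with hG
  have hyx : y - x = -(α • G) := by rw [hstep]; abel
  have hnyx : ‖y - x‖ = α * ‖G‖ := by
    rw [hyx, norm_neg, norm_smul, Real.norm_eq_abs, abs_of_pos hα]
  have hinner : (inner ℝ G (y - x) : ℝ) = -(α * ‖G‖ ^ 2) := by
    rw [hyx, inner_neg_right, inner_smul_right, real_inner_self_eq_norm_sq]
  have hdesc := descent_aux f hf s hconv M hM.le hLip x y hx hy
  rw [hinner, hnyx] at hdesc
  -- f y ≤ f x - α‖G‖² + M/2 α² ‖G‖²
  have hLy : ‖gradient f y‖ ≤ (1 + M * α) * ‖G‖ := by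
    have h1 : ‖gradient f y - G‖ ≤ M * ‖y - x‖ := hLip y hy x hx
    have h2 : ‖gradient f y‖ ≤ ‖G‖ + ‖gradient f y - G‖ := by
      have := norm_add_le G (gradient f y - G)
      simpa using this
    rw [hnyx] at h1
    nlinarith [norm_nonneg G]
  have h2Mα : 0 < 2 - M * α := by linarith
  rw [hnyx, div_mul_eq_mul_div, le_div_iff₀ h2Mα]
  have hG0 : (0:ℝ) ≤ ‖G‖ := norm_nonneg _
  have hGy0 : (0:ℝ) ≤ ‖gradient f y‖ := norm_nonneg _
  have hA : 0 ≤ α * ‖G‖ * (2 - M * α) :=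
    mul_nonneg (mul_nonneg hα.le hG0) h2Mα.le
  have h1 : α * ‖G‖ * (2 - M * α) * ‖gradient f y‖
      ≤ α * ‖G‖ * (2 - M * α) * ((1 + M * α) * ‖G‖) :=
    mul_le_mul_of_nonneg_left hLy hA
  have h2 : α * (2 - M * α) / 2 * ‖G‖ ^ 2 ≤ f x - f y := by nlinarith [sq_nonneg ‖G‖]
  have h3 : (2 + 2 * M * α) * (α * (2 - M * α) / 2 * ‖G‖ ^ 2)
      ≤ (2 + 2 * M * α) * (f x - f y) :=
    mul_le_mul_of_nonneg_left h2 (by positivity)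
  nlinarith [h1, h3]
end

section
/- For all real x₁, x₂: ((3x₁² − 2x₁x₂)² + x₁⁴)^{1/2} ≥ |x₁³ − x₁²x₂|^{2/3}, i.e., the function f(x₁,x₂) = x₁³ − x₁²x₂ satisfies ‖∇f(x)‖ ≥ |f(x)|^{2/3} everywhere; equivalently, ψ(t) = 3t^{1/3} is a desingularizing function for f on ℝ². -/
/-! With `y = x₁ - x₂` one has `f = x₁² y` and `‖∇f‖² = x₁² ((x₁ + 2y)² + x₁²)`, so after raising
both sides to the sixth power the claim becomes `x₁² y⁴ ≤ ((x₁ + 2y)² + x₁²)³`. The right-hand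
base dominates both `x₁²` and `y²`, which gives this at once. -/

lemma rpow_two_div_three_abs_le_sqrt {a b : ℝ} (h : a ^ 4 ≤ b ^ 3) :
    |a| ^ ((2 : ℝ) / 3) ≤ √b := by
  have hb : 0 ≤ b := by
    by_contra! hb
    nlinarith [pow_two_nonneg (a ^ 2), pow_pos (neg_pos.mpr hb) 3]
  have hlhs : (|a| ^ ((2 : ℝ) / 3)) ^ 6 = a ^ 4 := by
    rw [← Real.rpow_natCast, ← Real.rpow_mul (abs_nonneg a)]
    norm_num
    exact (even_two_mul 2).pow_abs a
  have hrhs : (√b) ^ 6 = b ^ 3 := by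
    rw [show 6 = 2 * 3 by rfl, pow_mul, Real.sq_sqrt hb]
  rw [← pow_le_pow_iff_left₀ (by positivity) (Real.sqrt_nonneg b) (by norm_num : 6 ≠ 0), hlhs, hrhs]
  exact h

lemma sq_mul_pow_four_le (x y : ℝ) : x ^ 2 * y ^ 4 ≤ ((x + 2 * y) ^ 2 + x ^ 2) ^ 3 := by
  set Q := (x + 2 * y) ^ 2 + x ^ 2
  have hx : x ^ 2 ≤ Q := by nlinarith [sq_nonneg (x + 2 * y)]
  have hy : y ^ 2 ≤ Q := by nlinarith [sq_nonneg (x + y)]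
  calc x ^ 2 * y ^ 4 = x ^ 2 * (y ^ 2) ^ 2 := by ring
    _ ≤ Q * Q ^ 2 := by gcongr
    _ = Q ^ 3 := by ring

theorem stmt17 (x₁ x₂ : ℝ) :
    |x₁ ^ 3 - x₁ ^ 2 * x₂| ^ ((2 : ℝ) / 3) ≤
      Real.sqrt ((3 * x₁ ^ 2 - 2 * x₁ * x₂) ^ 2 + x₁ ^ 4) := by
  apply rpow_two_div_three_abs_le_sqrt
  calc (x₁ ^ 3 - x₁ ^ 2 * x₂) ^ 4 = x₁ ^ 6 * (x₁ ^ 2 * (x₁ - x₂) ^ 4) := by ring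
    _ ≤ x₁ ^ 6 * ((x₁ + 2 * (x₁ - x₂)) ^ 2 + x₁ ^ 2) ^ 3 := by
        gcongr
        exact sq_mul_pow_four_le x₁ (x₁ - x₂)
    _ = ((3 * x₁ ^ 2 - 2 * x₁ * x₂) ^ 2 + x₁ ^ 4) ^ 3 := by ring
end
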